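/- Let Ω ⊂ ℝⁿ be open, 1 < p < ∞, 1 ≤ q ≤ p, a > 1. Then there exists a constant c(a,p,q) such that for all compactly supported Lipschitz f on Ω, with M_t = {|f| > t}: ∫_0^∞ cap_{p,q}(closure(M_{at}), M_t) d(t^p) ≤ c(a,p,q) ‖∇f‖_{L^{p,q}(Ω, mₙ; ℝⁿ)}^p. -/

import Mathlib

open MeasureTheory Set intervalIntegral
open scoped NNReal
open scoped ENNReal

/-- The distribution function `μ_{[f]}(s) = μ({|f| > s})`. -/
noncomputable def distribFn {α : Type*} [MeasurableSpace α] (μ : Measure α)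
    (f : α → ℝ) (s : ℝ) : ℝ≥0∞ :=
  μ {x | s < |f x|}

/-- The Lorentz `p,q`-(quasi)norm, `1 < p < ∞`, `1 ≤ q ≤ ∞`, expressed through the
distribution function. -/
noncomputable def lorentzNorm {α : Type*} [MeasurableSpace α] (μ : Measure α)
    (p : ℝ) (q : ℝ≥0∞) (f : α → ℝ) : ℝ≥0∞ :=
  if q = ⊤ then ⨆ s : Ioi (0 : ℝ), ENNReal.ofReal s.1 * distribFn μ f s.1 ^ (1 / p)
  else (ENNReal.ofReal p *
      ∫⁻ s in Ioi (0 : ℝ),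
        ENNReal.ofReal (s ^ (q.toReal - 1)) * distribFn μ f s ^ (q.toReal / p)) ^ (1 / q.toReal)

/-- Admissible functions for the conductor `(K, Ω)`: Lipschitz, compactly supported
in `Ω`, and `≥ 1` in a neighborhood of `K`. -/
def admissible {n : ℕ} (K Ω : Set (Fin n → ℝ)) : Set ((Fin n → ℝ) → ℝ) :=
  {u | (∃ c, LipschitzWith c u) ∧ HasCompactSupport u ∧ tsupport u ⊆ Ω ∧
    K ⊆ interior {x | 1 ≤ u x}}

/-- The Sobolev–Lorentz `p,q`-capacitance of the conductor `(K, Ω)`: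
`cap_{p,q}(K, Ω) = inf { ‖∇u‖_{L^{p,q}(Ω, mₙ; ℝⁿ)}^p : u ∈ W(K, Ω) }`. -/
noncomputable def capacitance (n : ℕ) (p : ℝ) (q : ℝ≥0∞)
    (K Ω : Set (Fin n → ℝ)) : ℝ≥0∞ :=
  ⨅ u ∈ admissible K Ω,
    lorentzNorm (volume.restrict Ω) p q (fun x => ‖fderiv ℝ u x‖) ^ p

section Aux
variable {α : Type*} [MeasurableSpace α] {μ ν : Measure α} {g h : α → ℝ}

lemma distribFn_antitone : Antitone (distribFn μ g) := fun _ _ hst =>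
  measure_mono fun _ hx => lt_of_le_of_lt hst hx

lemma distribFn_measurable : Measurable (distribFn μ g) :=
  distribFn_antitone.measurable

lemma lorentzNorm_mono {p : ℝ} {q : ℝ≥0∞} (hq : q ≠ ⊤) (hqp : 0 ≤ q.toReal / p)
    (hle : ∀ s : ℝ, distribFn μ g s ≤ distribFn ν h s) :
    lorentzNorm μ p q g ≤ lorentzNorm ν p q h := by
  rw [lorentzNorm, lorentzNorm, if_neg hq, if_neg hq]
  refine ENNReal.rpow_le_rpow ?_ (by positivity)
  exact mul_le_mul_right (lintegral_mono fun s =>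
    mul_le_mul_right (ENNReal.rpow_le_rpow (hle s) hqp) _) _

lemma distribFn_mono_ae (hle : ∀ᵐ x ∂μ, |g x| ≤ |h x|) (s : ℝ) :
    distribFn μ g s ≤ distribFn μ h s :=
  measure_mono_ae (hle.mono fun _ hx hgx => lt_of_lt_of_le hgx hx)

lemma distribFn_mono_measure (hμν : μ ≤ ν) (s : ℝ) :
    distribFn μ g s ≤ distribFn ν g s := Measure.le_iff'.1 hμν _

/-- substitution `s ↦ s / c` in a lintegral over `Ioi 0`. -/
lemma lintegral_Ioi_comp_div {c : ℝ} (hc : 0 < c) {F : ℝ → ℝ≥0∞} (hF : Measurable F) :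
    ∫⁻ s in Ioi (0 : ℝ), F (s / c) = ENNReal.ofReal c * ∫⁻ s in Ioi (0 : ℝ), F s := by
  have hc' : (c : ℝ)⁻¹ ≠ 0 := inv_ne_zero hc.ne'
  have hmeas : Measurable fun x : ℝ => c⁻¹ * x := measurable_const_mul _
  have hpre : (fun x : ℝ => c⁻¹ * x) ⁻¹' (Ioi 0) = Ioi 0 := by
    ext x; simp only [mem_preimage, mem_Ioi]
    constructor
    · intro hx; nlinarith [inv_pos.2 hc]
    · intro hx; positivity
  calc ∫⁻ s in Ioi (0 : ℝ), F (s / c)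
      = ∫⁻ s in Ioi (0 : ℝ), F (c⁻¹ * s) := by
        simp [div_eq_inv_mul]
    _ = ∫⁻ y, F y ∂(Measure.map (fun x : ℝ => c⁻¹ * x) (volume.restrict (Ioi 0))) :=
        (lintegral_map hF hmeas).symm
    _ = ∫⁻ y, F y ∂((Measure.map (fun x : ℝ => c⁻¹ * x) volume).restrict (Ioi 0)) := by
        rw [Measure.restrict_map hmeas measurableSet_Ioi, hpre]
    _ = ENNReal.ofReal c * ∫⁻ s in Ioi (0 : ℝ), F s := by
        rw [Real.map_volume_mul_left hc', inv_inv, abs_of_pos hc,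
          Measure.restrict_smul, lintegral_smul_measure, smul_eq_mul]

lemma distribFn_const_mul {c : ℝ} (hc : 0 < c) (s : ℝ) :
    distribFn μ (fun x => c * g x) s = distribFn μ g (s / c) := by
  unfold distribFn
  congr 1
  ext x
  simp only [mem_setOf_eq, abs_mul, abs_of_pos hc]
  rw [div_lt_iff₀ hc, mul_comm]

/-- Scaling of the Lorentz norm by a positive constant. -/
lemma lorentzNorm_const_mul {p q c : ℝ} (hp : 0 < p) (hq : 1 ≤ q) (hc : 0 < c) :
    lorentzNorm μ p (ENNReal.ofReal q) (fun x => c * g x)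
      = ENNReal.ofReal c * lorentzNorm μ p (ENNReal.ofReal q) g := by
  have hq0 : 0 < q := lt_of_lt_of_le one_pos hq
  have hqt : (ENNReal.ofReal q).toReal = q := ENNReal.toReal_ofReal hq0.le
  rw [lorentzNorm, lorentzNorm, if_neg ENNReal.ofReal_ne_top, if_neg ENNReal.ofReal_ne_top, hqt]
  set F : ℝ → ℝ≥0∞ := fun s => ENNReal.ofReal (s ^ (q - 1)) * distribFn μ g s ^ (q / p) with hF
  have hFmeas : Measurable F := by
    apply Measurable.mul
    · fun_prop
    · exact distribFn_measurable.pow_const _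
  have key : ∫⁻ s in Ioi (0 : ℝ),
      ENNReal.ofReal (s ^ (q - 1)) * distribFn μ (fun x => c * g x) s ^ (q / p)
      = ENNReal.ofReal (c ^ q) * ∫⁻ s in Ioi (0 : ℝ), F s := by
    have step1 : ∀ s ∈ Ioi (0:ℝ),
        ENNReal.ofReal (s ^ (q - 1)) * distribFn μ (fun x => c * g x) s ^ (q / p)
          = ENNReal.ofReal (c ^ (q-1)) * F (s / c) := by
      intro s hs
      rw [distribFn_const_mul hc, hF]
      simp only
      rw [← mul_assoc, ← ENNReal.ofReal_mul (by positivity)]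
      have : c ^ (q - 1) * (s / c) ^ (q - 1) = s ^ (q - 1) := by
        rw [← Real.mul_rpow hc.le (div_nonneg (le_of_lt hs) hc.le)]
        congr 1
        field_simp
      rw [this]
    have cpow : c ^ (q - 1) * c = c ^ q := by
      nth_rewrite 2 [← Real.rpow_one c]
      rw [← Real.rpow_add hc]
      norm_num
    rw [setLIntegral_congr_fun measurableSet_Ioi step1,
      lintegral_const_mul' _ _ ENNReal.ofReal_ne_top, lintegral_Ioi_comp_div hc hFmeas,
      ← mul_assoc, ← ENNReal.ofReal_mul (by positivity), cpow]
  rw [key, ← mul_assoc, mul_comm (ENNReal.ofReal p), mul_assoc,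
    ENNReal.mul_rpow_of_nonneg _ _ (by positivity),
    ← ENNReal.ofReal_rpow_of_pos (by positivity), ← ENNReal.rpow_mul,
    mul_one_div_cancel hq0.ne', ENNReal.rpow_one]


end Aux

section Mink
variable {α : Type*} [MeasurableSpace α] {μ : Measure α}

/-- Two-term Hölder inequality in `ℝ≥0∞`. -/
lemma enn_two_holder {r r' : ℝ} (hrr : r.HolderConjugate r') (u v A B : ℝ≥0∞) :
    u * A + v * B ≤ (u ^ r + v ^ r) ^ (1 / r) * (A ^ r' + B ^ r') ^ (1 / r') := by
  have h := ENNReal.lintegral_mul_le_Lp_mul_Lq (Measure.count : Measure Bool) hrr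
    (f := fun b => if b then u else v) (g := fun b => if b then A else B)
    Measurable.of_discrete.aemeasurable Measurable.of_discrete.aemeasurable
  simpa [lintegral_count, tsum_bool, add_comm] using h

lemma enn_rpow_self_mul {r : ℝ} (hr : 1 < r) (x : ℝ≥0∞) (hx : x ≠ ⊤) :
    x ^ r = x * x ^ (r - 1) := by
  rcases eq_or_ne x 0 with rfl | hx0
  · rw [ENNReal.zero_rpow_of_pos (by linarith), zero_mul]
  · have h2 : x ^ ((1:ℝ) + (r-1)) = x ^ (1:ℝ) * x ^ (r-1) := ENNReal.rpow_add _ _ hx0 hx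
    rw [show r = (1:ℝ) + (r-1) by ring, h2, ENNReal.rpow_one]
    norm_num

/-- Transposed Minkowski inequality, two functions. -/
lemma transpose_minkowski_two {r : ℝ} (hr : 1 ≤ r) {u v : α → ℝ≥0∞}
    (hu : Measurable u) (hv : Measurable v) :
    (∫⁻ x, u x ∂μ) ^ r + (∫⁻ x, v x ∂μ) ^ r
      ≤ (∫⁻ x, (u x ^ r + v x ^ r) ^ (1 / r) ∂μ) ^ r := by
  rcases eq_or_lt_of_le hr with rfl | hr
  · simp only [ENNReal.rpow_one, one_div, inv_one]
    rw [lintegral_add_left hu]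
  have hr0 : (0:ℝ) < r := by linarith
  set W := ∫⁻ x, (u x ^ r + v x ^ r) ^ (1 / r) ∂μ with hW
  have hA : (∫⁻ x, u x ∂μ) ≤ W := by
    refine lintegral_mono fun x => ?_
    calc u x = (u x ^ r) ^ (1/r) := by
          rw [← ENNReal.rpow_mul, mul_one_div_cancel hr0.ne', ENNReal.rpow_one]
      _ ≤ (u x ^ r + v x ^ r) ^ (1/r) :=
          ENNReal.rpow_le_rpow le_self_add (by positivity)
  have hB : (∫⁻ x, v x ∂μ) ≤ W := by
    refine lintegral_mono fun x => ?_
    calc v x = (v x ^ r) ^ (1/r) := by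
          rw [← ENNReal.rpow_mul, mul_one_div_cancel hr0.ne', ENNReal.rpow_one]
      _ ≤ (u x ^ r + v x ^ r) ^ (1/r) :=
          ENNReal.rpow_le_rpow le_add_self (by positivity)
  rcases eq_or_ne W ⊤ with hWt | hWt
  · rw [hWt, ENNReal.top_rpow_of_pos hr0]; exact le_top
  set A := ∫⁻ x, u x ∂μ
  set B := ∫⁻ x, v x ∂μ
  have hAt : A ≠ ⊤ := (lt_of_le_of_lt hA (lt_top_iff_ne_top.2 hWt)).ne
  have hBt : B ≠ ⊤ := (lt_of_le_of_lt hB (lt_top_iff_ne_top.2 hWt)).ne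
  set S := A ^ r + B ^ r with hS
  have hSt : S ≠ ⊤ := by
    simp only [hS, ne_eq, ENNReal.add_eq_top, not_or]
    exact ⟨ENNReal.rpow_ne_top_of_nonneg hr0.le hAt, ENNReal.rpow_ne_top_of_nonneg hr0.le hBt⟩
  rcases eq_or_ne S 0 with hS0 | hS0
  · rw [hS0]; exact zero_le
  set r' := r / (r - 1) with hr'
  have hconj : r.HolderConjugate r' := Real.HolderConjugate.conjExponent hr
  have hrsub : r - 1 ≠ 0 := by linarith
  have hr'0 : 0 < r' := div_pos (by linarith) (by linarith)
  have hrr' : (r - 1) * r' = r := by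
    rw [hr']; field_simp
  have key : S ≤ W * S ^ (1 / r') := by
    have expand : S = ∫⁻ x, (u x * A ^ (r-1) + v x * B ^ (r-1)) ∂μ := by
      rw [lintegral_add_left (hu.mul_const _), lintegral_mul_const' _ _
          (ENNReal.rpow_ne_top_of_nonneg (by linarith) hAt),
        lintegral_mul_const' _ _ (ENNReal.rpow_ne_top_of_nonneg (by linarith) hBt), hS,
        ← enn_rpow_self_mul hr A hAt, ← enn_rpow_self_mul hr B hBt]
    have hpt : ∀ x, u x * A ^ (r-1) + v x * B ^ (r-1)
        ≤ (u x ^ r + v x ^ r) ^ (1/r) * S ^ (1 / r') := by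
      intro x
      have h := enn_two_holder hconj (u x) (v x) (A ^ (r-1)) (B ^ (r-1))
      rwa [← ENNReal.rpow_mul (A) (r-1) r', ← ENNReal.rpow_mul (B) (r-1) r', hrr'] at h
    calc S = ∫⁻ x, (u x * A ^ (r-1) + v x * B ^ (r-1)) ∂μ := expand
      _ ≤ ∫⁻ x, (u x ^ r + v x ^ r) ^ (1/r) * S ^ (1 / r') ∂μ := lintegral_mono hpt
      _ = W * S ^ (1 / r') := by
          rw [lintegral_mul_const' _ _
            (ENNReal.rpow_ne_top_of_nonneg (one_div_nonneg.2 hr'0.le) hSt)]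
  -- from S ≤ W * S^(1/r') conclude S^(1/r) ≤ W, then S ≤ W^r
  have hSr : S ^ (1 / r) ≤ W := by
    have hdiv : S ^ (1 / r) = S / S ^ (1 / r') := by
      rw [ENNReal.eq_div_iff (by
          simp only [ne_eq, ENNReal.rpow_eq_zero_iff, not_or]
          constructor
          · rintro ⟨h0, -⟩; exact hS0 h0
          · rintro ⟨ht, -⟩; exact hSt ht)
        (ENNReal.rpow_ne_top_of_nonneg (one_div_nonneg.2 hr'0.le) hSt)]
      rw [← ENNReal.rpow_add _ _ hS0 hSt, one_div, one_div, Real.HolderConjugate.inv_add_inv_eq_one hconj.symm, ENNReal.rpow_one]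
    rw [hdiv]
    exact ENNReal.div_le_of_le_mul key
  calc S = (S ^ (1/r)) ^ r := by
        rw [← ENNReal.rpow_mul, one_div_mul_cancel hr0.ne', ENNReal.rpow_one]
    _ ≤ W ^ r := ENNReal.rpow_le_rpow hSr hr0.le

end Mink

section Mink2
variable {α ι : Type*} [MeasurableSpace α] {μ : Measure α}

lemma transpose_minkowski_finset {r : ℝ} (hr : 1 ≤ r) {G : ι → α → ℝ≥0∞}
    (hG : ∀ j, Measurable (G j)) (J : Finset ι) :
    ∑ j ∈ J, (∫⁻ x, G j x ∂μ) ^ r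
      ≤ (∫⁻ x, (∑ j ∈ J, G j x ^ r) ^ (1 / r) ∂μ) ^ r := by
  have hr0 : (0:ℝ) < r := by linarith
  induction J using Finset.cons_induction with
  | empty => simp
  | cons j₀ J hj₀ ih =>
    rw [Finset.sum_cons]
    have hHmeas : Measurable fun x => (∑ j ∈ J, G j x ^ r) ^ (1/r) := by
      apply Measurable.pow_const
      exact Finset.measurable_sum _ fun j _ => (hG j).pow_const _
    calc (∫⁻ x, G j₀ x ∂μ) ^ r + ∑ j ∈ J, (∫⁻ x, G j x ∂μ) ^ r
        ≤ (∫⁻ x, G j₀ x ∂μ) ^ r + (∫⁻ x, (∑ j ∈ J, G j x ^ r) ^ (1/r) ∂μ) ^ r :=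
          add_le_add_right ih _
      _ ≤ (∫⁻ x, (G j₀ x ^ r + ((∑ j ∈ J, G j x ^ r) ^ (1/r)) ^ r) ^ (1/r) ∂μ) ^ r :=
          transpose_minkowski_two hr (hG j₀) hHmeas
      _ = (∫⁻ x, (∑ j ∈ Finset.cons j₀ J hj₀, G j x ^ r) ^ (1/r) ∂μ) ^ r := by
          congr 1
          refine lintegral_congr fun x => ?_
          rw [← ENNReal.rpow_mul, one_div_mul_cancel hr0.ne', ENNReal.rpow_one,
            Finset.sum_cons]

lemma transpose_minkowski_tsum [Countable ι] {r : ℝ} (hr : 1 ≤ r) {G : ι → α → ℝ≥0∞}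
    (hG : ∀ j, Measurable (G j)) :
    ∑' j, (∫⁻ x, G j x ∂μ) ^ r
      ≤ (∫⁻ x, (∑' j, G j x ^ r) ^ (1 / r) ∂μ) ^ r := by
  have hr0 : (0:ℝ) < r := by linarith
  rw [ENNReal.tsum_eq_iSup_sum]
  refine iSup_le fun J => ?_
  refine le_trans (transpose_minkowski_finset hr hG J) ?_
  refine ENNReal.rpow_le_rpow (lintegral_mono fun x => ?_) hr0.le
  exact ENNReal.rpow_le_rpow (ENNReal.sum_le_tsum _) (by positivity)

end Mink2


section Superadd
variable {α : Type*} [MeasurableSpace α]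

lemma lorentz_superadd (μ : Measure α) {P Q : ℝ} (hP1 : 1 < P) (hQ1 : 1 ≤ Q) (hQP : Q ≤ P)
    {g : α → ℝ} (hg : Measurable g) {E : ℤ → Set α} (hE : ∀ j, MeasurableSet (E j))
    (hdisj : Pairwise (Function.onFun Disjoint E)) :
    ∑' j : ℤ, lorentzNorm μ P (ENNReal.ofReal Q) ((E j).indicator g) ^ P
      ≤ lorentzNorm μ P (ENNReal.ofReal Q) g ^ P := by
  have hQ0 : (0:ℝ) < Q := lt_of_lt_of_le one_pos hQ1
  have hP0 : (0:ℝ) < P := lt_trans one_pos hP1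
  have hqt : (ENNReal.ofReal Q).toReal = Q := ENNReal.toReal_ofReal hQ0.le
  set r : ℝ := P / Q with hrdef
  have hr1 : 1 ≤ r := (one_le_div hQ0).2 hQP
  have hr0 : (0:ℝ) < r := lt_of_lt_of_le one_pos hr1
  simp only [lorentzNorm, if_neg (ENNReal.ofReal_ne_top (r := Q)), hqt]
  set G : ℤ → ℝ → ℝ≥0∞ := fun j s =>
    ENNReal.ofReal (s ^ (Q - 1)) *
      distribFn μ ((E j).indicator g) s ^ (Q / P) with hG
  have hGmeas : ∀ j, Measurable (G j) := by
    intro j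
    exact ((by fun_prop : Measurable fun s : ℝ => ENNReal.ofReal (s ^ (Q - 1))).mul
      (distribFn_measurable.pow_const _))
  have pow_collapse : ∀ x : ℝ≥0∞, (x ^ (1/Q)) ^ P = x ^ r := by
    intro x; rw [← ENNReal.rpow_mul]; congr 1; rw [hrdef]; field_simp
  simp only [pow_collapse, ENNReal.mul_rpow_of_nonneg _ _ hr0.le]
  rw [ENNReal.tsum_mul_left]
  refine mul_le_mul_right ?_ _
  refine le_trans (transpose_minkowski_tsum hr1 hGmeas) ?_
  refine ENNReal.rpow_le_rpow ?_ hr0.le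
  refine lintegral_mono_ae ((ae_restrict_iff' measurableSet_Ioi).2
    (Filter.Eventually.of_forall fun s hs => ?_))
  have hs0 : (0:ℝ) < s := hs
  have hQP1 : (Q/P) * r = 1 := by rw [hrdef]; field_simp
  have hGr : ∀ j, G j s ^ r
      = ENNReal.ofReal (s^(Q-1)) ^ r * distribFn μ ((E j).indicator g) s := by
    intro j
    rw [hG]
    simp only
    rw [ENNReal.mul_rpow_of_nonneg _ _ hr0.le, ← ENNReal.rpow_mul, hQP1, ENNReal.rpow_one]
  have hdist : ∀ j, distribFn μ ((E j).indicator g) s = μ ({x | s < |g x|} ∩ E j) := by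
    intro j
    unfold distribFn
    congr 1
    ext x
    simp only [mem_setOf_eq, mem_inter_iff]
    by_cases hx : x ∈ E j
    · simp [Set.indicator_of_mem hx, hx]
    · simp [Set.indicator_of_notMem hx, hx, abs_zero, not_lt.2 hs0.le]
  have hAmeas : MeasurableSet {x | s < |g x|} := measurableSet_lt measurable_const hg.abs
  have sum_le : ∑' j, G j s ^ r ≤ ENNReal.ofReal (s^(Q-1)) ^ r * distribFn μ g s := by
    simp only [hGr, hdist]
    rw [ENNReal.tsum_mul_left]
    refine mul_le_mul_right ?_ _
    rw [← measure_iUnion (fun i j hij => (hdisj hij).mono inter_subset_right inter_subset_right)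
      (fun j => hAmeas.inter (hE j))]
    exact measure_mono (iUnion_subset fun j => inter_subset_left)
  calc (∑' j, G j s ^ r) ^ (1/r)
      ≤ (ENNReal.ofReal (s^(Q-1)) ^ r * distribFn μ g s) ^ (1/r) :=
        ENNReal.rpow_le_rpow sum_le (by positivity)
    _ = ENNReal.ofReal (s^(Q-1)) * distribFn μ g s ^ (Q/P) := by
        rw [ENNReal.mul_rpow_of_nonneg _ _ (by positivity), ← ENNReal.rpow_mul,
          mul_one_div_cancel hr0.ne', ENNReal.rpow_one]
        congr 1
        rw [hrdef, one_div_div]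
end Superadd

lemma norm_fderiv_comp_le {E : Type*} [NormedAddCommGroup E] [NormedSpace ℝ E]
    {f : E → ℝ} {h : ℝ → ℝ} {c : ℝ} (hc : 0 ≤ c)
    (hlip : ∀ y z : ℝ, |h y - h z| ≤ c * |y - z|)
    {x : E} (hdf : DifferentiableAt ℝ f x) :
    ‖fderiv ℝ (fun y => h (f y)) x‖ ≤ c * ‖fderiv ℝ f x‖ := by
  by_cases hdu : DifferentiableAt ℝ (fun y => h (f y)) x
  · refine le_of_forall_pos_le_add fun ε hε => ?_
    set δ := ε / (c + 1) with hδ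
    have hδ0 : 0 < δ := by positivity
    have hev : ∀ᶠ y in nhds x, ‖f y - f x - (fderiv ℝ f x) (y - x)‖ ≤ δ * ‖y - x‖ :=
      hdf.hasFDerivAt.isLittleO.bound hδ0
    have hev2 : ∀ᶠ y in nhds x,
        ‖(fun y => h (f y)) y - (fun y => h (f y)) x‖ ≤ (c * ‖fderiv ℝ f x‖ + ε) * ‖y - x‖ := by
      filter_upwards [hev] with y hy
      have h1 : ‖f y - f x‖ ≤ (‖fderiv ℝ f x‖ + δ) * ‖y - x‖ := by
        have hsplit : f y - f x
            = (fderiv ℝ f x) (y - x) + (f y - f x - (fderiv ℝ f x) (y - x)) := by ring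
        calc ‖f y - f x‖
            = ‖(fderiv ℝ f x) (y - x) + (f y - f x - (fderiv ℝ f x) (y - x))‖ := by
              rw [← hsplit]
          _ ≤ ‖(fderiv ℝ f x) (y - x)‖ + ‖f y - f x - (fderiv ℝ f x) (y - x)‖ :=
              norm_add_le _ _
          _ ≤ ‖fderiv ℝ f x‖ * ‖y - x‖ + δ * ‖y - x‖ :=
              add_le_add ((fderiv ℝ f x).le_opNorm _) hy
          _ = (‖fderiv ℝ f x‖ + δ) * ‖y - x‖ := by ring
      have h4 : ‖(fun y => h (f y)) y - (fun y => h (f y)) x‖ ≤ c * ‖f y - f x‖ := by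
        simpa [Real.norm_eq_abs] using hlip (f y) (f x)
      have h5 : c * δ ≤ ε := by
        have hc1 : (0:ℝ) < c + 1 := by linarith
        rw [hδ, mul_div_assoc', div_le_iff₀ hc1]
        nlinarith
      calc ‖(fun y => h (f y)) y - (fun y => h (f y)) x‖ ≤ c * ‖f y - f x‖ := h4
        _ ≤ c * ((‖fderiv ℝ f x‖ + δ) * ‖y - x‖) := mul_le_mul_of_nonneg_left h1 hc
        _ ≤ (c * ‖fderiv ℝ f x‖ + ε) * ‖y - x‖ := by nlinarith [norm_nonneg (y - x)]
    exact hdu.hasFDerivAt.le_of_lip' (by positivity) hev2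
  · rw [fderiv_zero_of_not_differentiableAt hdu]
    simp only [norm_zero]
    positivity

lemma lint_weight {p α β : ℝ} (hp : 1 < p) (h0 : 0 < α) (hab : α ≤ β) :
    ∫⁻ t in Ico α β, ENNReal.ofReal (p * t ^ (p-1)) = ENNReal.ofReal (β ^ p - α ^ p) := by
  rw [Measure.restrict_congr_set Ico_ae_eq_Ioc]
  have hcont : ContinuousOn (fun t : ℝ => p * t ^ (p-1)) (Icc α β) := by
    refine continuousOn_const.mul (fun t ht => ContinuousAt.continuousWithinAt ?_)
    exact Real.continuousAt_rpow_const t (p-1) (Or.inl (ne_of_gt (lt_of_lt_of_le h0 ht.1)))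
  have hint : IntegrableOn (fun t : ℝ => p * t ^ (p-1)) (Ioc α β) :=
    (hcont.integrableOn_Icc).mono_set Ioc_subset_Icc_self
  have hnn : 0 ≤ᶠ[ae (volume.restrict (Ioc α β))] fun t : ℝ => p * t ^ (p-1) := by
    refine (ae_restrict_iff' measurableSet_Ioc).2 (Filter.Eventually.of_forall fun t ht => ?_)
    have ht0 : 0 < t := lt_trans h0 ht.1
    positivity
  rw [← ofReal_integral_eq_lintegral_ofReal hint hnn]
  congr 1
  rw [← intervalIntegral.integral_of_le hab, intervalIntegral.integral_const_mul,
    integral_rpow (Or.inl (by linarith))]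
  have hpne : p ≠ 0 := by linarith
  rw [sub_add_cancel]
  field_simp

lemma Ioi_eq_iUnion_Ico {s : ℝ} (hs : 1 < s) :
    Ioi (0:ℝ) = ⋃ j : ℤ, Ico (s^j) (s^(j+1)) := by
  have hs0 : (0:ℝ) < s := lt_trans one_pos hs
  ext t
  simp only [mem_Ioi, mem_iUnion]
  constructor
  · intro ht
    exact exists_mem_Ico_zpow ht hs
  · rintro ⟨j, hj, -⟩
    exact lt_of_lt_of_le (zpow_pos hs0 j) hj

lemma Ico_zpow_pairwise_disjoint {s : ℝ} (hs : 1 < s) :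
    Pairwise (Function.onFun Disjoint fun j : ℤ => Ico (s^j) (s^(j+1))) := by
  have hs0 : (0:ℝ) < s := lt_trans one_pos hs
  have key : ∀ i j : ℤ, i < j → Disjoint (Ico (s^i) (s^(i+1))) (Ico (s^j) (s^(j+1))) := by
    intro i j hij
    refine Set.disjoint_left.2 fun t hti htj => ?_
    have h1 : t < s^(i+1) := hti.2
    have h2 : s^j ≤ t := htj.1
    have h3 : (s:ℝ)^(i+1) ≤ s^j := zpow_le_zpow_right₀ hs.le (by omega)
    linarith
  intro i j hij
  rcases hij.lt_or_gt with h | h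
  · exact key i j h
  · exact (key j i h).symm

/-- Conductor inequality, case `1 ≤ q ≤ p`:
`∫_0^∞ cap_{p,q}(closure M_{at}, M_t) d(t^p) ≤ c(a,p,q) ‖∇f‖_{L^{p,q}(Ω)}^p`,
where `d(t^p)` means integration against `p t^{p−1} dt`. -/
theorem conductor_inequality_q_le_p {n : ℕ} (p q : ℝ)
    (hp : 1 < p) (hq : 1 ≤ q) (hqp : q ≤ p)
    {Ω : Set (Fin n → ℝ)} (hΩ : IsOpen Ω)
    (a : ℝ) (ha : 1 < a) :
    ∃ c : ℝ, 0 < c ∧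
      ∀ f : (Fin n → ℝ) → ℝ, (∃ L, LipschitzWith L f) → HasCompactSupport f →
        tsupport f ⊆ Ω →
        (∫⁻ t in Ioi (0 : ℝ),
            capacitance n p (ENNReal.ofReal q)
              (closure {x | x ∈ Ω ∧ a * t < |f x|}) {x | x ∈ Ω ∧ t < |f x|} *
              ENNReal.ofReal (p * t ^ (p - 1))) ≤
          ENNReal.ofReal c *
            lorentzNorm (volume.restrict Ω) p (ENNReal.ofReal q)
              (fun x => ‖fderiv ℝ f x‖) ^ p := by
  have hp0 : (0:ℝ) < p := by linarith
  have ha0 : (0:ℝ) < a := by linarith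
  have hq0 : (0:ℝ) < q := by linarith
  have hQtop : (ENNReal.ofReal q) ≠ ⊤ := ENNReal.ofReal_ne_top
  have hQt : (ENNReal.ofReal q).toReal = q := ENNReal.toReal_ofReal hq0.le
  have hQp : 0 ≤ (ENNReal.ofReal q).toReal / p := by rw [hQt]; positivity
  set ρ : ℝ := a ^ ((1:ℝ)/6) with hρdef
  have hρ1 : 1 < ρ := by
    rw [hρdef]
    exact (Real.one_lt_rpow_iff_of_pos ha0).2 (Or.inl ⟨ha, by norm_num⟩)
  have hρ0 : (0:ℝ) < ρ := by linarith
  have haρ : a = ρ^(6:ℕ) := by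
    rw [hρdef, ← Real.rpow_natCast (a ^ ((1:ℝ)/6)) 6, ← Real.rpow_mul ha0.le]
    norm_num
  set sb : ℝ := ρ^(3:ℕ) with hsbdef
  have hsb1 : 1 < sb := by rw [hsbdef]; exact one_lt_pow₀ hρ1 (by norm_num)
  have hsb0 : (0:ℝ) < sb := by linarith
  set d : ℝ := ρ^(5:ℕ) - ρ^(4:ℕ) with hddef
  have h45 : (ρ:ℝ)^(4:ℕ) < ρ^(5:ℕ) := pow_lt_pow_right₀ hρ1 (by norm_num)
  have hd0 : 0 < d := by rw [hddef]; linarith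
  have hsp1 : 1 < sb ^ p := (Real.one_lt_rpow_iff_of_pos hsb0).2 (Or.inl ⟨hsb1, hp0⟩)
  refine ⟨(sb ^ p - 1) * (d⁻¹) ^ p, by
    have h1 : (0:ℝ) < sb ^ p - 1 := by linarith
    have h2 : (0:ℝ) < (d⁻¹) ^ p := Real.rpow_pos_of_pos (by positivity) p
    positivity, ?_⟩
  intro f hfl hcf hsupp
  obtain ⟨L, hL⟩ := hfl
  have hfc : Continuous f := hL.continuous
  set g : (Fin n → ℝ) → ℝ := fun x => ‖fderiv ℝ f x‖ with hgdef
  have hgmeas : Measurable g := (measurable_fderiv ℝ f).norm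
  set σ : ℤ → ℝ := fun j => sb^j * ρ^(4:ℕ) with hσdef
  set τ : ℤ → ℝ := fun j => sb^j * ρ^(5:ℕ) with hτdef
  set δ : ℤ → ℝ := fun j => sb^j * d with hδdef
  have hσ0 : ∀ j, 0 < σ j := fun j => mul_pos (zpow_pos hsb0 j) (by positivity)
  have hδ0 : ∀ j, 0 < δ j := fun j => mul_pos (zpow_pos hsb0 j) hd0
  have hστ : ∀ j, σ j < τ j := fun j => by
    rw [hσdef, hτdef]
    exact mul_lt_mul_of_pos_left h45 (zpow_pos hsb0 j)
  have hτσδ : ∀ j, τ j - σ j = δ j := fun j => by rw [hσdef, hτdef, hδdef, hddef]; ring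
  set E : ℤ → Set (Fin n → ℝ) := fun j => {x | σ j ≤ |f x| ∧ |f x| ≤ τ j} with hEdef
  have hEmeas : ∀ j, MeasurableSet (E j) := by
    intro j
    have hEeq : E j = (fun x => |f x|) ⁻¹' (Icc (σ j) (τ j)) := by
      ext x; simp [hEdef, mem_Icc]
    rw [hEeq]
    exact hfc.abs.measurable measurableSet_Icc
  have hEdisj : Pairwise (Function.onFun Disjoint E) := by
    have key : ∀ i j : ℤ, i < j → Disjoint (E i) (E j) := by
      intro i j hij
      refine Set.disjoint_left.2 fun x hxi hxj => ?_
      have h1 : |f x| ≤ τ i := hxi.2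
      have h2 : σ j ≤ |f x| := hxj.1
      have h3 : τ i < σ j := by
        rw [hτdef, hσdef]
        have hsbij : sb^(i+1) ≤ sb^j := zpow_le_zpow_right₀ hsb1.le (by omega)
        have h57 : (ρ:ℝ)^(5:ℕ) < ρ^(3:ℕ) * ρ^(4:ℕ) := by
          have : (ρ:ℝ)^(5:ℕ) < ρ^(7:ℕ) := pow_lt_pow_right₀ hρ1 (by norm_num)
          calc (ρ:ℝ)^(5:ℕ) < ρ^(7:ℕ) := this
            _ = ρ^(3:ℕ) * ρ^(4:ℕ) := by ring
        calc sb^i * ρ^(5:ℕ) < sb^i * (ρ^(3:ℕ) * ρ^(4:ℕ)) :=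
              mul_lt_mul_of_pos_left h57 (zpow_pos hsb0 i)
          _ = sb^(i+1) * ρ^(4:ℕ) := by rw [zpow_add_one₀ hsb0.ne', hsbdef]; ring
          _ ≤ sb^j * ρ^(4:ℕ) := mul_le_mul_of_nonneg_right hsbij (by positivity)
      linarith
    intro i j hij
    rcases hij.lt_or_gt with h | h
    · exact key i j h
    · exact (key j i h).symm
  -- ramp test functions
  set ramp : ℤ → ℝ → ℝ := fun j z => min (max ((δ j)⁻¹ * (|z| - σ j)) 0) 1 with hrampdef
  have hramp_lip : ∀ j, LipschitzWith (‖(δ j)⁻¹‖₊ * 1) (ramp j) := by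
    intro j
    have h0 : Isometry (fun y : ℝ => y - σ j) :=
      Isometry.of_dist_eq (by intro y z; simp [Real.dist_eq])
    have h1 : LipschitzWith 1 (fun z : ℝ => |z| - σ j) := by
      have h2 := h0.lipschitz.comp (lipschitzWith_one_norm (E := ℝ))
      simp only [Function.comp_def, Real.norm_eq_abs, one_mul] at h2
      exact h2
    exact (((lipschitzWith_smul ((δ j)⁻¹)).comp h1).max_const 0).min_const 1
  have hramp_bound : ∀ j y z, |ramp j y - ramp j z| ≤ (δ j)⁻¹ * |y - z| := by
    intro j y z
    have h := (hramp_lip j).dist_le_mul y z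
    simpa [Real.dist_eq, abs_inv, abs_of_pos (hδ0 j)] using h
  have hramp_zero : ∀ j z, |z| ≤ σ j → ramp j z = 0 := by
    intro j z hz
    rw [hrampdef]
    simp only
    have h1 : (δ j)⁻¹ * (|z| - σ j) ≤ 0 :=
      mul_nonpos_iff.2 (Or.inl ⟨(inv_pos.2 (hδ0 j)).le, by linarith⟩)
    rw [max_eq_right h1, min_eq_left zero_le_one]
  have hramp_one : ∀ j z, τ j ≤ |z| → ramp j z = 1 := by
    intro j z hz
    have h1 : 1 ≤ (δ j)⁻¹ * (|z| - σ j) := by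
      rw [← hτσδ j] at *
      rw [inv_mul_eq_div, le_div_iff₀ (by rw [hτσδ j]; exact hδ0 j)]
      linarith
    rw [hrampdef]
    simp only
    rw [max_eq_left (le_trans zero_le_one h1), min_eq_right h1]
  have hramp_nonneg : ∀ j z, 0 ≤ ramp j z := by
    intro j z
    rw [hrampdef]
    exact le_min (le_max_right _ 0) zero_le_one
  set u : ℤ → (Fin n → ℝ) → ℝ := fun j x => ramp j (f x) with hudef
  have hu_supp : ∀ j x, u j x ≠ 0 → σ j < |f x| := by
    intro j x hx
    by_contra hcon
    push_neg at hcon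
    exact hx (hramp_zero j (f x) hcon)
  have htsupp : ∀ j, tsupport (u j) ⊆ {x | σ j ≤ |f x|} := by
    intro j
    refine closure_minimal (fun x hx => (hu_supp j x hx).le) ?_
    exact isClosed_le continuous_const hfc.abs
  have hfne : ∀ j x, σ j ≤ |f x| → f x ≠ 0 := by
    intro j x hx h0
    rw [h0] at hx
    simp only [abs_zero] at hx
    exact absurd hx (not_le.2 (hσ0 j))
  have hucompact : ∀ j, HasCompactSupport (u j) := by
    intro j
    refine IsCompact.of_isClosed_subset hcf (isClosed_tsupport _) ?_
    refine closure_minimal (fun x hx => ?_) (isClosed_tsupport f)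
    exact subset_closure (hfne j x (hu_supp j x hx).le)
  -- almost-everywhere gradient bound
  have hgrad : ∀ j, ∀ᵐ x : Fin n → ℝ,
      ‖fderiv ℝ (u j) x‖ ≤ (δ j)⁻¹ * (E j).indicator g x := by
    intro j
    filter_upwards [hL.ae_differentiableAt (μ := volume)] with x hdfx
    rcases lt_or_ge (|f x|) (σ j) with hlt | hge
    · have hopen : IsOpen {y : Fin n → ℝ | |f y| < σ j} := isOpen_lt hfc.abs continuous_const
      have hev : u j =ᶠ[nhds x] fun _ => (0:ℝ) := by
        filter_upwards [hopen.mem_nhds hlt] with y hy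
        exact hramp_zero j (f y) (le_of_lt hy)
      rw [hev.fderiv_eq, fderiv_fun_const]
      simp only [Pi.zero_apply, norm_zero]
      exact mul_nonneg (inv_pos.2 (hδ0 j)).le (Set.indicator_nonneg (fun y _ => norm_nonneg _) x)
    rcases lt_or_ge (τ j) (|f x|) with hgt | hle2
    · have hopen : IsOpen {y : Fin n → ℝ | τ j < |f y|} := isOpen_lt continuous_const hfc.abs
      have hev : u j =ᶠ[nhds x] fun _ => (1:ℝ) := by
        filter_upwards [hopen.mem_nhds hgt] with y hy
        exact hramp_one j (f y) (le_of_lt hy)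
      rw [hev.fderiv_eq, fderiv_fun_const]
      simp only [Pi.zero_apply, norm_zero]
      exact mul_nonneg (inv_pos.2 (hδ0 j)).le (Set.indicator_nonneg (fun y _ => norm_nonneg _) x)
    · have hxE : x ∈ E j := ⟨hge, hle2⟩
      rw [Set.indicator_of_mem hxE]
      exact norm_fderiv_comp_le (inv_pos.2 (hδ0 j)).le (hramp_bound j) hdfx
  -- capacitance bound on each block
  have hcap : ∀ j : ℤ, ∀ t ∈ Ico (sb^j) (sb^(j+1)),
      capacitance n p (ENNReal.ofReal q)
          (closure {x | x ∈ Ω ∧ a * t < |f x|}) {x | x ∈ Ω ∧ t < |f x|}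
        ≤ (ENNReal.ofReal (δ j)⁻¹ *
            lorentzNorm (volume.restrict Ω) p (ENNReal.ofReal q) ((E j).indicator g)) ^ p := by
    intro j t ht
    obtain ⟨hjt, htj⟩ := ht
    have hjt0 : (0:ℝ) < sb^j := zpow_pos hsb0 j
    have ht0 : 0 < t := lt_of_lt_of_le hjt0 hjt
    have hσt : t < σ j := by
      rw [hσdef]
      calc t < sb^(j+1) := htj
        _ = sb^j * ρ^(3:ℕ) := by rw [zpow_add_one₀ hsb0.ne', hsbdef]
        _ < sb^j * ρ^(4:ℕ) :=
            mul_lt_mul_of_pos_left (pow_lt_pow_right₀ hρ1 (by norm_num)) hjt0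
    have hτat : τ j < a * t := by
      rw [hτdef, haρ]
      calc sb^j * ρ^(5:ℕ) < sb^j * ρ^(6:ℕ) :=
            mul_lt_mul_of_pos_left (pow_lt_pow_right₀ hρ1 (by norm_num)) hjt0
        _ ≤ ρ^(6:ℕ) * t := by
            rw [mul_comm]
            exact mul_le_mul_of_nonneg_left hjt (by positivity)
    have hadm : u j ∈ admissible (closure {x | x ∈ Ω ∧ a * t < |f x|})
        {x | x ∈ Ω ∧ t < |f x|} := by
      refine ⟨⟨_, (hramp_lip j).comp hL⟩, hucompact j, ?_, ?_⟩
      · refine (htsupp j).trans fun x hx => ?_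
        exact ⟨hsupp (subset_closure (hfne j x hx)), lt_of_lt_of_le hσt hx⟩
      · have hsub1 : {x | x ∈ Ω ∧ a * t < |f x|} ⊆ {x | a * t ≤ |f x|} :=
          fun x hx => hx.2.le
        have hclosed : IsClosed {x : Fin n → ℝ | a * t ≤ |f x|} :=
          isClosed_le continuous_const hfc.abs
        refine (closure_minimal hsub1 hclosed).trans ?_
        have hopen : IsOpen {x : Fin n → ℝ | τ j < |f x|} := isOpen_lt continuous_const hfc.abs
        have hsub2 : {x : Fin n → ℝ | a * t ≤ |f x|} ⊆ {x | τ j < |f x|} :=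
          fun x hx => lt_of_lt_of_le hτat hx
        have hsub3 : {x : Fin n → ℝ | τ j < |f x|} ⊆ {x | 1 ≤ u j x} :=
          fun x hx => le_of_eq (hramp_one j (f x) hx.le).symm
        exact hsub2.trans (interior_maximal hsub3 hopen)
    have h1 : capacitance n p (ENNReal.ofReal q)
        (closure {x | x ∈ Ω ∧ a * t < |f x|}) {x | x ∈ Ω ∧ t < |f x|}
        ≤ lorentzNorm (volume.restrict {x | x ∈ Ω ∧ t < |f x|}) p (ENNReal.ofReal q)
            (fun x => ‖fderiv ℝ (u j) x‖) ^ p := iInf₂_le (u j) hadm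
    refine h1.trans ?_
    refine ENNReal.rpow_le_rpow ?_ hp0.le
    have hMtΩ : {x | x ∈ Ω ∧ t < |f x|} ⊆ Ω := fun x hx => hx.1
    have step1 : lorentzNorm (volume.restrict {x | x ∈ Ω ∧ t < |f x|}) p (ENNReal.ofReal q)
          (fun x => ‖fderiv ℝ (u j) x‖)
        ≤ lorentzNorm (volume.restrict Ω) p (ENNReal.ofReal q)
          (fun x => ‖fderiv ℝ (u j) x‖) :=
      lorentzNorm_mono hQtop hQp
        (fun s => distribFn_mono_measure (Measure.restrict_mono hMtΩ le_rfl) s)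
    refine step1.trans ?_
    have step2 : lorentzNorm (volume.restrict Ω) p (ENNReal.ofReal q)
          (fun x => ‖fderiv ℝ (u j) x‖)
        ≤ lorentzNorm (volume.restrict Ω) p (ENNReal.ofReal q)
          (fun x => (δ j)⁻¹ * (E j).indicator g x) := by
      refine lorentzNorm_mono hQtop hQp (fun s => distribFn_mono_ae ?_ s)
      refine ae_restrict_of_ae ((hgrad j).mono fun x hx => ?_)
      rw [abs_norm, abs_of_nonneg
        (mul_nonneg (inv_pos.2 (hδ0 j)).le (Set.indicator_nonneg (fun y _ => norm_nonneg _) x))]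
      exact hx
    refine step2.trans ?_
    rw [lorentzNorm_const_mul hp0 hq (inv_pos.2 (hδ0 j))]
  -- decompose and sum
  rw [Ioi_eq_iUnion_Ico hsb1,
    lintegral_iUnion (fun j => measurableSet_Ico) (Ico_zpow_pairwise_disjoint hsb1)]
  have hwmeas : Measurable fun t : ℝ => ENNReal.ofReal (p * t ^ (p-1)) := by fun_prop
  have hpiece : ∀ j : ℤ,
      (∫⁻ t in Ico (sb^j) (sb^(j+1)),
        capacitance n p (ENNReal.ofReal q)
          (closure {x | x ∈ Ω ∧ a * t < |f x|}) {x | x ∈ Ω ∧ t < |f x|} *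
          ENNReal.ofReal (p * t ^ (p - 1)))
      ≤ ENNReal.ofReal ((sb ^ p - 1) * (d⁻¹) ^ p) *
          lorentzNorm (volume.restrict Ω) p (ENNReal.ofReal q) ((E j).indicator g) ^ p := by
    intro j
    set N := lorentzNorm (volume.restrict Ω) p (ENNReal.ofReal q) ((E j).indicator g) with hNdef
    set D := (ENNReal.ofReal (δ j)⁻¹ * N) ^ p with hDdef
    have hjt0 : (0:ℝ) < sb^j := zpow_pos hsb0 j
    have hjj1 : (sb:ℝ)^j ≤ sb^(j+1) := zpow_le_zpow_right₀ hsb1.le (by omega)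
    calc ∫⁻ t in Ico (sb^j) (sb^(j+1)),
            capacitance n p (ENNReal.ofReal q)
              (closure {x | x ∈ Ω ∧ a * t < |f x|}) {x | x ∈ Ω ∧ t < |f x|} *
              ENNReal.ofReal (p * t ^ (p - 1))
        ≤ ∫⁻ t in Ico (sb^j) (sb^(j+1)), D * ENNReal.ofReal (p * t ^ (p - 1)) := by
          refine lintegral_mono_ae ((ae_restrict_iff' measurableSet_Ico).2
            (Filter.Eventually.of_forall fun t ht => ?_))
          exact mul_le_mul_left (hcap j t ht) _
      _ = D * ∫⁻ t in Ico (sb^j) (sb^(j+1)), ENNReal.ofReal (p * t ^ (p - 1)) :=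
          lintegral_const_mul D hwmeas
      _ = D * ENNReal.ofReal ((sb^(j+1)) ^ p - (sb^j) ^ p) := by
          rw [lint_weight hp hjt0 hjj1]
      _ = ENNReal.ofReal ((sb ^ p - 1) * (d⁻¹) ^ p) * N ^ p := by
          rw [hDdef, ENNReal.mul_rpow_of_nonneg _ _ hp0.le]
          have e0 : ((sb:ℝ)^(j+1)) ^ p - (sb^j) ^ p = (sb^j) ^ p * (sb ^ p - 1) := by
            rw [zpow_add_one₀ hsb0.ne', Real.mul_rpow (by positivity) hsb0.le]
            ring
          have e1 : ((δ j)⁻¹:ℝ) ^ p * ((sb^j) ^ p * (sb ^ p - 1)) = (sb ^ p - 1) * (d⁻¹) ^ p := by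
            rw [← mul_assoc, ← Real.mul_rpow (by positivity) (by positivity)]
            have e2 : (δ j)⁻¹ * sb^j = d⁻¹ := by
              rw [hδdef]
              field_simp
            rw [e2]
            ring
          rw [e0, ENNReal.ofReal_rpow_of_pos (inv_pos.2 (hδ0 j))]
          rw [mul_comm (ENNReal.ofReal ((δ j)⁻¹ ^ p)) (N ^ p), mul_assoc,
            ← ENNReal.ofReal_mul (by positivity), e1, mul_comm]
  refine le_trans (ENNReal.tsum_le_tsum hpiece) ?_
  rw [ENNReal.tsum_mul_left]
  exact mul_le_mul_right (lorentz_superadd (volume.restrict Ω) hp hq hqp hgmeas hEmeas hEdisj) _
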